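/- arXiv:math/0603275 — 3 statements merged into one kernel-verified Lean document; each statement's English description precedes it below -/
import Mathlib

section
/- Let n ≥ 1, let a ≤ b be real numbers, let A : [a,b] → Mₙ(ℂ) be continuous, and let W(s,t) be the path-ordered exponential of A. Let U : [a,b] → Mₙ(ℂ) be continuously differentiable with U(t) invertible for every t ∈ [a,b], and define the gauge-transformed connection A′(t) = U′(t)·U(t)⁻¹ + U(t)·A(t)·U(t)⁻¹. If W′(s,t) denotes the path-ordered exponential of A′, then for all s,t ∈ [a,b] one has the gauge-transformation (chiral symmetry) formula W′(s,t) = U(t)·W(s,t)·U(s)⁻¹. -/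
open MeasureTheory intervalIntegral Set

attribute [local instance] Matrix.linftyOpNormedRing Matrix.linftyOpNormedAlgebra

/-- The terms of the path-ordered exponential: `P₀(s,t) = I` and
`P_{k+1}(s,t) = ∫_s^t A(u) · P_k(s,u) du`. -/
noncomputable def pathOrderedTerm (n : ℕ) (A : ℝ → Matrix (Fin n) (Fin n) ℂ) :
    ℕ → ℝ → ℝ → Matrix (Fin n) (Fin n) ℂ
  | 0, _, _ => 1
  | k + 1, s, t => ∫ u in s..t, A u * pathOrderedTerm n A k s u

/-- The path-ordered exponential (Wilson line) `W(s,t) = Σ_{k=0}^∞ P_k(s,t)`. -/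
noncomputable def wilsonLine (n : ℕ) (A : ℝ → Matrix (Fin n) (Fin n) ℂ)
    (s t : ℝ) : Matrix (Fin n) (Fin n) ℂ :=
  ∑' k : ℕ, pathOrderedTerm n A k s t

namespace WilsonGaugeAux

theorem matComplete (n : ℕ) : CompleteSpace (Matrix (Fin n) (Fin n) ℂ) :=
  FiniteDimensional.complete ℂ _

attribute [local instance] matComplete

noncomputable instance matENormedAddMonoid (n : ℕ) : ENormedAddMonoid (Matrix (Fin n) (Fin n) ℂ) :=
  NormedAddGroup.toENormedAddMonoid

instance matPseudoMetrizable (n : ℕ) : TopologicalSpace.PseudoMetrizableSpace (Matrix (Fin n) (Fin n) ℂ) :=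
  inferInstanceAs (TopologicalSpace.PseudoMetrizableSpace (Fin n → Fin n → ℂ))

variable {n : ℕ} {a b s : ℝ} {B : ℝ → Matrix (Fin n) (Fin n) ℂ} {M : ℝ}

theorem uIcc_subset (hs : s ∈ Icc a b) {t : ℝ} (ht : t ∈ Icc a b) :
    uIcc s t ⊆ Icc a b := by
  rw [uIcc]
  exact Icc_subset_Icc (le_min hs.1 ht.1) (max_le hs.2 ht.2)

theorem contIntInt {f : ℝ → Matrix (Fin n) (Fin n) ℂ} (hf : ContinuousOn f (Icc a b))
    (hs : s ∈ Icc a b) {t : ℝ} (ht : t ∈ Icc a b) :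
    IntervalIntegrable f volume s t :=
  (hf.mono (uIcc_subset hs ht)).intervalIntegrable

/-- The key integral estimate. -/
theorem step_bound (hs : s ∈ Icc a b)
    (hB : ContinuousOn B (Icc a b)) (hM : ∀ u ∈ Icc a b, ‖B u‖ ≤ M)
    {f : ℝ → Matrix (Fin n) (Fin n) ℂ} (hf : ContinuousOn f (Icc a b))
    {c : ℝ} (hc : 0 ≤ c) (k : ℕ)
    (hfb : ∀ u ∈ Icc a b, ‖f u‖ ≤ c * |u - s| ^ k)
    {t : ℝ} (ht : t ∈ Icc a b) :
    ‖∫ u in s..t, B u * f u‖ ≤ M * c * |t - s| ^ (k + 1) / (k + 1) := by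
  have hM0 : (0:ℝ) ≤ M := le_trans (norm_nonneg _) (hM s hs)
  have hg : ContinuousOn (fun u => B u * f u) (Icc a b) := hB.mul hf
  rcases le_total s t with h | h
  · have hsub : Icc s t ⊆ Icc a b := Icc_subset_Icc hs.1 ht.2
    have h1 : ‖∫ u in s..t, B u * f u‖ ≤ ∫ u in s..t, ‖B u * f u‖ :=
      intervalIntegral.norm_integral_le_integral_norm h
    have h2 : (∫ u in s..t, ‖B u * f u‖) ≤ ∫ u in s..t, M * c * (u - s) ^ k := by
      apply intervalIntegral.integral_mono_on h
      · exact (contIntInt hg hs ht).norm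
      · exact (Continuous.intervalIntegrable (by continuity) _ _)
      · intro u hu
        have h3 : ‖B u * f u‖ ≤ ‖B u‖ * ‖f u‖ := norm_mul_le _ _
        have h4 : ‖B u‖ * ‖f u‖ ≤ M * (c * |u - s| ^ k) :=
          mul_le_mul (hM u (hsub hu)) (hfb u (hsub hu)) (norm_nonneg _) hM0
        have h5 : |u - s| = u - s := abs_of_nonneg (by linarith [hu.1])
        rw [h5] at h4
        calc ‖B u * f u‖ ≤ M * (c * (u - s) ^ k) := h3.trans h4
          _ = M * c * (u - s) ^ k := by ring
    have h3 : (∫ u in s..t, M * c * (u - s) ^ k) = M * c * ((t - s) ^ (k + 1) / (k + 1)) := by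
      rw [intervalIntegral.integral_const_mul,
        intervalIntegral.integral_comp_sub_right (fun x => x ^ k) s]
      simp [integral_pow]
    have habs : |t - s| = t - s := abs_of_nonneg (by linarith)
    rw [habs, mul_div_assoc]
    exact h1.trans (h2.trans_eq h3)
  · have hsub : Icc t s ⊆ Icc a b := Icc_subset_Icc ht.1 hs.2
    rw [intervalIntegral.integral_symm, norm_neg]
    have h1 : ‖∫ u in t..s, B u * f u‖ ≤ ∫ u in t..s, ‖B u * f u‖ :=
      intervalIntegral.norm_integral_le_integral_norm h
    have h2 : (∫ u in t..s, ‖B u * f u‖) ≤ ∫ u in t..s, M * c * (s - u) ^ k := by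
      apply intervalIntegral.integral_mono_on h
      · exact (contIntInt hg ht hs).norm
      · exact (Continuous.intervalIntegrable (by continuity) _ _)
      · intro u hu
        have h3 : ‖B u * f u‖ ≤ ‖B u‖ * ‖f u‖ := norm_mul_le _ _
        have h4 : ‖B u‖ * ‖f u‖ ≤ M * (c * |u - s| ^ k) :=
          mul_le_mul (hM u (hsub hu)) (hfb u (hsub hu)) (norm_nonneg _) hM0
        have h5 : |u - s| = s - u := by
          rw [abs_sub_comm]; exact abs_of_nonneg (by linarith [hu.2])
        rw [h5] at h4
        calc ‖B u * f u‖ ≤ M * (c * (s - u) ^ k) := h3.trans h4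
          _ = M * c * (s - u) ^ k := by ring
    have h3 : (∫ u in t..s, M * c * (s - u) ^ k) = M * c * ((s - t) ^ (k + 1) / (k + 1)) := by
      rw [intervalIntegral.integral_const_mul,
        intervalIntegral.integral_comp_sub_left (fun x => x ^ k) s]
      simp [integral_pow]
    have habs : |t - s| = s - t := by
      rw [abs_sub_comm]; exact abs_of_nonneg (by linarith)
    rw [habs, mul_div_assoc]
    exact h1.trans (h2.trans_eq h3)

theorem term_continuousOn (hab : a ≤ b) (hs : s ∈ Icc a b)
    (hB : ContinuousOn B (Icc a b)) (k : ℕ) :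
    ContinuousOn (fun t => pathOrderedTerm n B k s t) (Icc a b) := by
  induction k with
  | zero => exact continuousOn_const
  | succ k ih =>
      have hg : ContinuousOn (fun u => B u * pathOrderedTerm n B k s u) (Icc a b) := hB.mul ih
      have hint : IntervalIntegrable (fun u => B u * pathOrderedTerm n B k s u) volume a b := by
        apply ContinuousOn.intervalIntegrable
        rwa [uIcc_of_le hab]
      have hmem : s ∈ uIcc a b := by rwa [uIcc_of_le hab]
      have := intervalIntegral.continuousOn_primitive_interval' hint hmem
      rw [uIcc_of_le hab] at this
      exact this

theorem term_norm_le [Nonempty (Fin n)] (hab : a ≤ b) (hs : s ∈ Icc a b)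
    (hB : ContinuousOn B (Icc a b)) (hM : ∀ u ∈ Icc a b, ‖B u‖ ≤ M) (k : ℕ) :
    ∀ t ∈ Icc a b, ‖pathOrderedTerm n B k s t‖ ≤ M ^ k * |t - s| ^ k / (k.factorial : ℝ) := by
  have hM0 : (0:ℝ) ≤ M := le_trans (norm_nonneg _) (hM s hs)
  induction k with
  | zero =>
      intro t ht
      simp [pathOrderedTerm]
  | succ k ih =>
      intro t ht
      have hfac : ((k.factorial : ℝ)) ≠ 0 := by positivity
      have hfac' : ((k+1).factorial : ℝ) = (k+1) * (k.factorial : ℝ) := by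
        rw [Nat.factorial_succ]; push_cast; ring
      have hc : (0:ℝ) ≤ M ^ k / (k.factorial : ℝ) := by positivity
      have hfb : ∀ u ∈ Icc a b, ‖pathOrderedTerm n B k s u‖ ≤ (M ^ k / (k.factorial : ℝ)) * |u - s| ^ k := by
        intro u hu
        calc ‖pathOrderedTerm n B k s u‖ ≤ M ^ k * |u - s| ^ k / (k.factorial : ℝ) := ih u hu
          _ = (M ^ k / (k.factorial : ℝ)) * |u - s| ^ k := by ring
      have := step_bound hs hB hM (term_continuousOn hab hs hB k) hc k hfb ht
      calc ‖pathOrderedTerm n B (k+1) s t‖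
          ≤ M * (M ^ k / (k.factorial : ℝ)) * |t - s| ^ (k + 1) / (k + 1) := this
        _ = M ^ (k+1) * |t - s| ^ (k+1) / ((k+1).factorial : ℝ) := by
            rw [hfac']; field_simp; ring

theorem term_summable [Nonempty (Fin n)] (hab : a ≤ b) (hs : s ∈ Icc a b)
    (hB : ContinuousOn B (Icc a b)) (hM : ∀ u ∈ Icc a b, ‖B u‖ ≤ M)
    {t : ℝ} (ht : t ∈ Icc a b) :
    Summable (fun k => pathOrderedTerm n B k s t) := by
  refine Summable.of_norm_bounded (g := fun k => (M * |t - s|) ^ k / (k.factorial : ℝ))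
    (Real.summable_pow_div_factorial _) fun k => ?_
  calc ‖pathOrderedTerm n B k s t‖ ≤ M ^ k * |t - s| ^ k / (k.factorial : ℝ) :=
        term_norm_le hab hs hB hM k t ht
    _ = (M * |t - s|) ^ k / (k.factorial : ℝ) := by rw [mul_pow]

theorem term_norm_le' [Nonempty (Fin n)] (hab : a ≤ b) (hs : s ∈ Icc a b)
    (hB : ContinuousOn B (Icc a b)) (hM : ∀ u ∈ Icc a b, ‖B u‖ ≤ M) (k : ℕ)
    {t : ℝ} (ht : t ∈ Icc a b) :
    ‖pathOrderedTerm n B k s t‖ ≤ (M * (b - a)) ^ k / (k.factorial : ℝ) := by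
  have hM0 : (0:ℝ) ≤ M := le_trans (norm_nonneg _) (hM s hs)
  have habs : |t - s| ≤ b - a := by
    rw [abs_sub_le_iff]
    constructor <;> [linarith [ht.2, hs.1]; linarith [ht.1, hs.2]]
  calc ‖pathOrderedTerm n B k s t‖ ≤ M ^ k * |t - s| ^ k / (k.factorial : ℝ) :=
        term_norm_le hab hs hB hM k t ht
    _ ≤ M ^ k * (b - a) ^ k / (k.factorial : ℝ) := by gcongr
    _ = (M * (b - a)) ^ k / (k.factorial : ℝ) := by rw [mul_pow]

theorem wilson_continuousOn [Nonempty (Fin n)] (hab : a ≤ b) (hs : s ∈ Icc a b)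
    (hB : ContinuousOn B (Icc a b)) (hM : ∀ u ∈ Icc a b, ‖B u‖ ≤ M) :
    ContinuousOn (wilsonLine n B s) (Icc a b) := by
  apply continuousOn_tsum (term_continuousOn hab hs hB)
    (Real.summable_pow_div_factorial (M * (b - a)))
  intro k t ht
  exact term_norm_le' hab hs hB hM k ht

/-- Exchange of `tsum` and set integral over `Ioc p q ⊆ Icc a b`. -/
theorem setIntegral_tsum_comm {F : ℕ → ℝ → Matrix (Fin n) (Fin n) ℂ}
    (hFc : ∀ k, ContinuousOn (F k) (Icc a b))
    {c : ℕ → ℝ} (hc : Summable c) (hFb : ∀ k, ∀ u ∈ Icc a b, ‖F k u‖ ≤ c k)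
    {p q : ℝ} (hpq : p ≤ q) (hp : p ∈ Icc a b) (hq : q ∈ Icc a b) :
    ∫ u in Ioc p q, ∑' k, F k u = ∑' k, ∫ u in Ioc p q, F k u := by
  have hsub : Icc p q ⊆ Icc a b := Icc_subset_Icc hp.1 hq.2
  have hint : ∀ k, IntegrableOn (F k) (Ioc p q) volume := fun k =>
    (((hFc k).mono hsub).integrableOn_Icc).mono_set Ioc_subset_Icc_self
  refine (MeasureTheory.integral_tsum_of_summable_integral_norm hint ?_).symm
  apply Summable.of_nonneg_of_le
    (fun k => setIntegral_nonneg measurableSet_Ioc (fun u _ => norm_nonneg _))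
    (fun k => ?_) (hc.mul_left (q - p))
  have h1 : (∫ u in Ioc p q, ‖F k u‖) ≤ ∫ _u in Ioc p q, c k := by
    apply setIntegral_mono_on ((hint k).norm) _ measurableSet_Ioc
    · intro u hu
      exact hFb k u (hsub (Ioc_subset_Icc_self hu))
    · exact integrableOn_const measure_Ioc_lt_top.ne
  have h2 : (∫ _u in Ioc p q, c k) = (q - p) * c k := by
    rw [setIntegral_const, measureReal_def, Real.volume_Ioc, smul_eq_mul,
      ENNReal.toReal_ofReal (by linarith)]
  exact h1.trans_eq h2

theorem intervalIntegral_tsum_comm {F : ℕ → ℝ → Matrix (Fin n) (Fin n) ℂ}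
    (hFc : ∀ k, ContinuousOn (F k) (Icc a b))
    {c : ℕ → ℝ} (hc : Summable c) (hFb : ∀ k, ∀ u ∈ Icc a b, ‖F k u‖ ≤ c k)
    (hs : s ∈ Icc a b) {t : ℝ} (ht : t ∈ Icc a b) :
    ∫ u in s..t, ∑' k, F k u = ∑' k, ∫ u in s..t, F k u := by
  rcases le_total s t with h | h
  · rw [intervalIntegral.integral_of_le h, setIntegral_tsum_comm hFc hc hFb h hs ht]
    simp only [intervalIntegral.integral_of_le h]
  · rw [intervalIntegral.integral_of_ge h, setIntegral_tsum_comm hFc hc hFb h ht hs,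
      ← tsum_neg]
    simp only [intervalIntegral.integral_of_ge h]

theorem wilson_integral_eq [Nonempty (Fin n)] (hab : a ≤ b) (hs : s ∈ Icc a b)
    (hB : ContinuousOn B (Icc a b)) (hM : ∀ u ∈ Icc a b, ‖B u‖ ≤ M)
    {t : ℝ} (ht : t ∈ Icc a b) :
    wilsonLine n B s t = 1 + ∫ u in s..t, B u * wilsonLine n B s u := by
  have hM0 : (0:ℝ) ≤ M := le_trans (norm_nonneg _) (hM s hs)
  have hswap : (∫ u in s..t, B u * wilsonLine n B s u)
      = ∑' k, ∫ u in s..t, B u * pathOrderedTerm n B k s u := by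
    have heq : EqOn (fun u => B u * wilsonLine n B s u)
        (fun u => ∑' k, B u * pathOrderedTerm n B k s u) (uIcc s t) := by
      intro u hu
      have hu' : u ∈ Icc a b := uIcc_subset hs ht hu
      exact ((term_summable hab hs hB hM hu').tsum_mul_left (B u)).symm
    rw [intervalIntegral.integral_congr heq]
    exact intervalIntegral_tsum_comm
      (fun k => hB.mul (term_continuousOn hab hs hB k))
      ((Real.summable_pow_div_factorial (M * (b - a))).mul_left M)
      (fun k u hu => by
        calc ‖B u * pathOrderedTerm n B k s u‖ ≤ ‖B u‖ * ‖pathOrderedTerm n B k s u‖ :=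
              norm_mul_le _ _
          _ ≤ M * ((M * (b - a)) ^ k / (k.factorial : ℝ)) :=
              mul_le_mul (hM u hu) (term_norm_le' hab hs hB hM k hu) (norm_nonneg _) hM0)
      hs ht
  have hterm : ∀ k : ℕ, (∫ u in s..t, B u * pathOrderedTerm n B k s u)
      = pathOrderedTerm n B (k+1) s t := fun k => rfl
  rw [hswap]
  simp only [hterm]
  rw [wilsonLine, Summable.tsum_eq_zero_add (term_summable hab hs hB hM ht)]
  rfl

theorem wilson_hasDeriv [Nonempty (Fin n)] (hab : a ≤ b) (hs : s ∈ Icc a b)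
    (hB : ContinuousOn B (Icc a b)) (hM : ∀ u ∈ Icc a b, ‖B u‖ ≤ M)
    {t : ℝ} (ht : t ∈ Icc a b) :
    HasDerivWithinAt (wilsonLine n B s) (B t * wilsonLine n B s t) (Icc a b) t := by
  haveI : Fact (t ∈ Icc a b) := ⟨ht⟩
  have hWc : ContinuousOn (wilsonLine n B s) (Icc a b) := wilson_continuousOn hab hs hB hM
  have hg : ContinuousOn (fun u => B u * wilsonLine n B s u) (Icc a b) := hB.mul hWc
  have hprim : HasDerivWithinAt (fun x => ∫ u in s..x, B u * wilsonLine n B s u)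
      (B t * wilsonLine n B s t) (Icc a b) t :=
    intervalIntegral.integral_hasDerivWithinAt_right (contIntInt hg hs ht)
      (hg.stronglyMeasurableAtFilter_nhdsWithin measurableSet_Icc t) (hg t ht)
  have h2 : HasDerivWithinAt (fun x => 1 + ∫ u in s..x, B u * wilsonLine n B s u)
      (B t * wilsonLine n B s t) (Icc a b) t := hprim.const_add 1
  exact h2.congr (fun x hx => wilson_integral_eq hab hs hB hM hx)
    (wilson_integral_eq hab hs hB hM ht)

theorem ftc2 {f f' : ℝ → Matrix (Fin n) (Fin n) ℂ}
    (hf' : ContinuousOn f' (Icc a b))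
    (hd : ∀ x ∈ Icc a b, HasDerivWithinAt f (f' x) (Icc a b) x)
    (hs : s ∈ Icc a b) {t : ℝ} (ht : t ∈ Icc a b) :
    ∫ u in s..t, f' u = f t - f s := by
  have hfc : ContinuousOn f (Icc a b) := fun x hx => (hd x hx).continuousWithinAt
  have key : ∀ p q : ℝ, p ∈ Icc a b → q ∈ Icc a b → p ≤ q →
      ∫ u in p..q, f' u = f q - f p := by
    intro p q hp hq hpq
    apply intervalIntegral.integral_eq_sub_of_hasDeriv_right_of_le hpq
      (hfc.mono (Icc_subset_Icc hp.1 hq.2))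
      (fun x hx => ?_) (contIntInt hf' hp hq)
    have hx' : x ∈ Icc a b := ⟨hp.1.trans hx.1.le, hx.2.le.trans hq.2⟩
    exact (hd x hx').mono_of_mem_nhdsWithin
      (Icc_mem_nhdsGT_of_mem ⟨hp.1.trans hx.1.le, hx.2.trans_le hq.2⟩)
  rcases le_total s t with h | h
  · exact key s t hs ht h
  · rw [intervalIntegral.integral_symm, key t s ht hs h, neg_sub]

theorem ode_unique (hs : s ∈ Icc a b)
    (hB : ContinuousOn B (Icc a b)) (hM : ∀ u ∈ Icc a b, ‖B u‖ ≤ M)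
    {D : ℝ → Matrix (Fin n) (Fin n) ℂ} (hD : ContinuousOn D (Icc a b))
    (heq : ∀ t ∈ Icc a b, D t = ∫ u in s..t, B u * D u) :
    ∀ t ∈ Icc a b, D t = 0 := by
  have hM0 : (0:ℝ) ≤ M := le_trans (norm_nonneg _) (hM s hs)
  obtain ⟨C₀, hC₀⟩ := isCompact_Icc.exists_bound_of_continuousOn hD
  set C := max C₀ 0 with hC
  have hC0 : (0:ℝ) ≤ C := le_max_right _ _
  have hCb : ∀ u ∈ Icc a b, ‖D u‖ ≤ C := fun u hu => (hC₀ u hu).trans (le_max_left _ _)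
  have claim : ∀ k : ℕ, ∀ t ∈ Icc a b, ‖D t‖ ≤ (C * M ^ k / (k.factorial : ℝ)) * |t - s| ^ k := by
    intro k
    induction k with
    | zero => intro t ht; simpa using hCb t ht
    | succ k ih =>
        intro t ht
        have hc : (0:ℝ) ≤ C * M ^ k / (k.factorial : ℝ) := by positivity
        have := step_bound hs hB hM hD hc k ih ht
        rw [heq t ht]
        have hfac' : ((k+1).factorial : ℝ) = (k+1) * (k.factorial : ℝ) := by
          rw [Nat.factorial_succ]; push_cast; ring
        have hfac : ((k.factorial : ℝ)) ≠ 0 := by positivity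
        calc ‖∫ u in s..t, B u * D u‖
            ≤ M * (C * M ^ k / (k.factorial : ℝ)) * |t - s| ^ (k + 1) / (k + 1) := this
          _ = (C * M ^ (k+1) / ((k+1).factorial : ℝ)) * |t - s| ^ (k+1) := by
              rw [hfac']; field_simp; ring
  intro t ht
  have hlim : Filter.Tendsto (fun k : ℕ => C * ((M * |t - s|) ^ k / (k.factorial : ℝ)))
      Filter.atTop (nhds 0) := by
    have := (Real.summable_pow_div_factorial (M * |t - s|)).tendsto_atTop_zero
    simpa using this.const_mul C
  have hle : ‖D t‖ ≤ 0 := by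
    apply ge_of_tendsto' hlim
    intro k
    calc ‖D t‖ ≤ (C * M ^ k / (k.factorial : ℝ)) * |t - s| ^ k := claim k t ht
      _ = C * ((M * |t - s|) ^ k / (k.factorial : ℝ)) := by rw [mul_pow]; ring
  simpa using le_antisymm hle (norm_nonneg _)

theorem wilson_self (t : ℝ) : wilsonLine n B t t = 1 := by
  rw [wilsonLine]
  rw [tsum_eq_single 0]
  · rfl
  · intro k hk
    match k, hk with
    | k + 1, _ => exact intervalIntegral.integral_same

end WilsonGaugeAux

open WilsonGaugeAux

/-- **Gauge transformation (chiral symmetry) of Wilson lines**. -/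
theorem wilsonLine_gauge_transformation (n : ℕ) (hn : 1 ≤ n) (a b : ℝ) (hab : a ≤ b)
    (A : ℝ → Matrix (Fin n) (Fin n) ℂ) (hA : ContinuousOn A (Icc a b))
    (U U' : ℝ → Matrix (Fin n) (Fin n) ℂ)
    (hU' : ContinuousOn U' (Icc a b))
    (hUderiv : ∀ t ∈ Icc a b, HasDerivWithinAt U (U' t) (Icc a b) t)
    (hUinv : ∀ t ∈ Icc a b, IsUnit (U t))
    (A' : ℝ → Matrix (Fin n) (Fin n) ℂ)
    (hA' : ∀ t ∈ Icc a b, A' t = U' t * (U t)⁻¹ + U t * A t * (U t)⁻¹) :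
    ∀ s ∈ Icc a b, ∀ t ∈ Icc a b,
      wilsonLine n A' s t = U t * wilsonLine n A s t * (U s)⁻¹ := by
  haveI : Nonempty (Fin n) := ⟨⟨0, hn⟩⟩
  haveI := matComplete n
  intro s hs t ht
  -- continuity of U and U⁻¹
  have hUc : ContinuousOn U (Icc a b) := fun x hx => (hUderiv x hx).continuousWithinAt
  have hUinvc : ContinuousOn (fun x => (U x)⁻¹) (Icc a b) := by
    have hfun : (fun x => (U x)⁻¹) = fun x => Ring.inverse (U x) :=
      funext fun x => Matrix.nonsing_inv_eq_ringInverse _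
    rw [hfun]
    intro x hx
    have h1 : ContinuousAt Ring.inverse (U x) := by
      have := NormedRing.inverse_continuousAt (hUinv x hx).unit
      rwa [IsUnit.unit_spec] at this
    exact h1.comp_continuousWithinAt (hUc x hx)
  have hA'c : ContinuousOn A' (Icc a b) :=
    ContinuousOn.congr ((hU'.mul hUinvc).add ((hUc.mul hA).mul hUinvc)) hA'
  -- bounds
  obtain ⟨M₀, hM₀⟩ := isCompact_Icc.exists_bound_of_continuousOn hA
  set M := max M₀ 0 with hMdef
  have hM : ∀ u ∈ Icc a b, ‖A u‖ ≤ M := fun u hu => (hM₀ u hu).trans (le_max_left _ _)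
  obtain ⟨M₁, hM₁⟩ := isCompact_Icc.exists_bound_of_continuousOn hA'c
  set M' := max M₁ 0 with hM'def
  have hM' : ∀ u ∈ Icc a b, ‖A' u‖ ≤ M' := fun u hu => (hM₁ u hu).trans (le_max_left _ _)
  -- the candidate solution V
  set V : ℝ → Matrix (Fin n) (Fin n) ℂ :=
    fun x => U x * (wilsonLine n A s x * (U s)⁻¹) with hVdef
  have hWc : ContinuousOn (wilsonLine n A s) (Icc a b) := wilson_continuousOn hab hs hA hM
  have hVc : ContinuousOn V (Icc a b) := hUc.mul (hWc.mul continuousOn_const)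
  have hVd : ∀ x ∈ Icc a b, HasDerivWithinAt V (A' x * V x) (Icc a b) x := by
    intro x hx
    have hW := wilson_hasDeriv hab hs hA hM hx
    have h1 : HasDerivWithinAt (fun y => wilsonLine n A s y * (U s)⁻¹)
        ((A x * wilsonLine n A s x) * (U s)⁻¹) (Icc a b) x := hW.mul_const _
    have h2 := (hUderiv x hx).mul h1
    have hinv : (U x)⁻¹ * U x = 1 :=
      Matrix.nonsing_inv_mul _ ((Matrix.isUnit_iff_isUnit_det _).1 (hUinv x hx))
    have halg : A' x * V x
        = U' x * (wilsonLine n A s x * (U s)⁻¹)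
          + U x * (A x * wilsonLine n A s x * (U s)⁻¹) := by
      rw [hA' x hx, hVdef]
      simp only [add_mul, mul_assoc]
      congr 1
      · congr 1
        rw [← mul_assoc, hinv, one_mul]
      · congr 1
        rw [← mul_assoc ((U x)⁻¹), hinv, one_mul]
    rw [halg]
    exact h2
  -- V satisfies the same integral equation
  have hVs : V s = 1 := by
    rw [hVdef]
    simp only
    rw [wilson_self, one_mul,
      Matrix.mul_nonsing_inv _ ((Matrix.isUnit_iff_isUnit_det _).1 (hUinv s hs))]
  have hVeq : ∀ x ∈ Icc a b, V x = 1 + ∫ u in s..x, A' u * V u := by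
    intro x hx
    have := ftc2 (f := V) (f' := fun u => A' u * V u) (hA'c.mul hVc) hVd hs hx
    rw [this, hVs]
    abel
  -- the difference satisfies the homogeneous equation
  set W' : ℝ → Matrix (Fin n) (Fin n) ℂ := wilsonLine n A' s with hW'def
  have hW'c : ContinuousOn W' (Icc a b) := wilson_continuousOn hab hs hA'c hM'
  have hDeq : ∀ x ∈ Icc a b, W' x - V x = ∫ u in s..x, A' u * (W' u - V u) := by
    intro x hx
    have h1 : W' x = 1 + ∫ u in s..x, A' u * W' u :=
      wilson_integral_eq hab hs hA'c hM' hx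
    have h2 := hVeq x hx
    have h3 : (∫ u in s..x, A' u * (W' u - V u))
        = (∫ u in s..x, A' u * W' u) - ∫ u in s..x, A' u * V u := by
      rw [← intervalIntegral.integral_sub (contIntInt (f := fun u => A' u * W' u) (hA'c.mul hW'c) hs hx)
        (contIntInt (f := fun u => A' u * V u) (hA'c.mul hVc) hs hx)]
      congr 1
      funext u
      rw [mul_sub]
    rw [h3, h1, h2]
    abel
  have hzero := ode_unique hs hA'c hM' (hW'c.sub hVc) hDeq t ht
  have : W' t = V t := by
    have := sub_eq_zero.mp hzero
    exact this
  show wilsonLine n A' s t = _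
  rw [show wilsonLine n A' s t = W' t from rfl, this, hVdef, mul_assoc]
end

section
/- (Riemann's Mellin-transform formula relating ζ and the Jacobi theta function) For every s ∈ ℂ with Re s > 1/2, the function t ↦ ((θ(it) − 1)/2)·t^{s−1} is integrable on (0, ∞) and ∫₀^∞ ((θ(it) − 1)/2)·t^{s−1} dt = π^{−s}·Γ(s)·ζ(2s). -/
open MeasureTheory Complex Real HurwitzZeta

lemma evenKernel_zero_eq_jacobiTheta (t : ℝ) :
    (HurwitzZeta.evenKernel 0 t : ℂ) = jacobiTheta (t * Complex.I) := by
  rw [show ((0 : UnitAddCircle)) = ((0:ℝ) : UnitAddCircle) by norm_num,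
    HurwitzZeta.evenKernel_def, jacobiTheta_eq_jacobiTheta₂]
  push_cast
  simp [mul_comm]

/-- **Riemann's Mellin-transform formula** relating the Riemann zeta function to the
Jacobi theta function: for `Re s > 1/2`, the function `t ↦ ((θ(it) - 1)/2) * t^(s-1)`
is integrable on `(0, ∞)` and its integral equals `π^(-s) * Γ(s) * ζ(2s)`. -/
theorem mellin_jacobiTheta_eq_gamma_mul_zeta (s : ℂ) (hs : 1 / 2 < s.re) :
    IntegrableOn (fun t : ℝ => ((jacobiTheta (t * Complex.I) - 1) / 2) * (t : ℂ) ^ (s - 1))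
      (Set.Ioi 0) ∧
    ∫ t : ℝ in Set.Ioi 0, ((jacobiTheta (t * Complex.I) - 1) / 2) * (t : ℂ) ^ (s - 1) =
      (π : ℂ) ^ (-s) * Complex.Gamma s * riemannZeta (2 * s) := by
  have hk : (hurwitzEvenFEPair 0).k < s.re := by
    simpa [hurwitzEvenFEPair] using hs
  have hM := (hurwitzEvenFEPair 0).hasMellin hk
  have hf₀ : (hurwitzEvenFEPair 0).f₀ = 1 := by simp [hurwitzEvenFEPair]
  have hfun : ∀ t ∈ Set.Ioi (0:ℝ),
      ((jacobiTheta (t * Complex.I) - 1) / 2) * (t : ℂ) ^ (s - 1) =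
      (1/2 : ℂ) * ((t : ℂ) ^ (s - 1) •
        ((hurwitzEvenFEPair 0).f t - (hurwitzEvenFEPair 0).f₀)) := by
    intro t _
    rw [hf₀]
    simp only [smul_eq_mul, hurwitzEvenFEPair, Function.comp_apply,
      evenKernel_zero_eq_jacobiTheta]
    ring
  constructor
  · have hint : IntegrableOn (fun t : ℝ => (1/2 : ℂ) * ((t : ℂ) ^ (s - 1) •
        ((hurwitzEvenFEPair 0).f t - (hurwitzEvenFEPair 0).f₀))) (Set.Ioi 0) :=
      hM.1.const_mul (1/2 : ℂ)
    exact hint.congr_fun (fun t ht => (hfun t ht).symm) measurableSet_Ioi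
  · rw [setIntegral_congr_fun measurableSet_Ioi hfun, integral_const_mul]
    have : ∫ t : ℝ in Set.Ioi 0, (t : ℂ) ^ (s - 1) •
        ((hurwitzEvenFEPair 0).f t - (hurwitzEvenFEPair 0).f₀) = (hurwitzEvenFEPair 0).Λ s :=
      hM.2
    rw [this]
    have hΛ : completedRiemannZeta (2*s) = ((hurwitzEvenFEPair 0).Λ s)/2 := by
      rw [← completedHurwitzZetaEven_zero, completedHurwitzZetaEven]
      norm_num
    have h2s : (2*s).re = 2 * s.re := by simp
    have hre : 0 < (2*s).re := by rw [h2s]; linarith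
    have hz : riemannZeta (2*s) = completedRiemannZeta (2*s) / Gammaℝ (2*s) :=
      riemannZeta_def_of_ne_zero (fun h => by simp [h] at hre)
    have hGne : Gammaℝ (2*s) ≠ 0 := Gammaℝ_ne_zero_of_re_pos hre
    have hG : Gammaℝ (2*s) = (π : ℂ) ^ (-s) * Complex.Gamma s := by
      rw [Gammaℝ_def]
      congr 1
      · congr 1; ring
      · congr 1; ring
    rw [hz, hΛ, ← hG]
    field_simp
end

section
/- For every τ ∈ ℂ with Im τ > 0, the Dedekind eta function satisfies η(τ+1) ≠ 0 and the Jacobi theta function satisfies θ(τ) = η((τ+1)/2)² / η(τ+1). -/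
open Complex Real

/-- The Dedekind eta function `η(τ) = exp(iπτ/12) * ∏_{n=1}^∞ (1 - exp(2πinτ))`. -/
noncomputable def dedekindEta (τ : ℂ) : ℂ :=
  Complex.exp (π * Complex.I * τ / 12) *
    ∏' n : ℕ, (1 - Complex.exp (2 * π * Complex.I * ((n : ℂ) + 1) * τ))

namespace JTP

open Filter Finset Topology

/-- Partial products of `∏ (1 - x^(i+1))`. -/
noncomputable def Fp (x : ℂ) (m : ℕ) : ℂ := ∏ i ∈ Finset.range m, (1 - x ^ (i + 1))

/-- The infinite product `∏_{n≥1} (1 - x^n)`. -/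
noncomputable def Pinf (x : ℂ) : ℂ := ∏' n : ℕ, (1 - x ^ (n + 1))

lemma factor_ne_zero {x : ℂ} (hx : ‖x‖ < 1) (n : ℕ) : 1 - x ^ (n + 1) ≠ 0 := by
  intro h
  have h1 : x ^ (n + 1) = 1 := by linear_combination -h
  have : ‖x ^ (n + 1)‖ < 1 := by
    rw [norm_pow]
    exact pow_lt_one₀ (norm_nonneg x) hx (Nat.succ_ne_zero n)
  rw [h1, norm_one] at this
  exact lt_irrefl _ this

lemma summable_log {x : ℂ} (hx : ‖x‖ < 1) :
    Summable (fun n : ℕ => Complex.log (1 - x ^ (n + 1))) := by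
  have hb : ∀ n : ℕ, ‖Complex.log (1 - x ^ (n + 1))‖ ≤
      (‖x‖ * (1 - ‖x‖)⁻¹ / 2 + 1) * ‖x‖ ^ (n + 1) := by
    intro n
    have hxn : ‖-(x ^ (n + 1))‖ ≤ ‖x‖ := by
      rw [norm_neg, norm_pow]
      calc ‖x‖ ^ (n + 1) ≤ ‖x‖ ^ 1 :=
            pow_le_pow_of_le_one (norm_nonneg x) hx.le (Nat.one_le_iff_ne_zero.2 (Nat.succ_ne_zero n))
        _ = ‖x‖ := pow_one _
    have hxn' : ‖-(x ^ (n + 1))‖ < 1 := lt_of_le_of_lt hxn hx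
    have := Complex.norm_log_one_add_le hxn'
    rw [show (1 : ℂ) + -(x ^ (n+1)) = 1 - x ^ (n+1) by ring] at this
    refine this.trans ?_
    have h1 : ‖-(x ^ (n + 1))‖ = ‖x‖ ^ (n + 1) := by rw [norm_neg, norm_pow]
    rw [h1]
    have hx0 : (0:ℝ) ≤ ‖x‖ := norm_nonneg x
    have hinv : (1 - ‖x‖ ^ (n+1))⁻¹ ≤ (1 - ‖x‖)⁻¹ := by
      apply inv_anti₀
      · linarith [h1 ▸ hxn']
      · have : ‖x‖ ^ (n+1) ≤ ‖x‖ := h1 ▸ hxn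
        linarith
    have hp : ‖x‖ ^ (n+1) ≤ ‖x‖ := h1 ▸ hxn
    have hinv0 : (0:ℝ) ≤ (1 - ‖x‖ ^ (n+1))⁻¹ := by
      apply inv_nonneg.2
      have : ‖x‖ ^ (n+1) ≤ ‖x‖ := hp
      linarith [hx]
    calc (‖x‖ ^ (n+1)) ^ 2 * (1 - ‖x‖ ^ (n+1))⁻¹ / 2 + ‖x‖ ^ (n+1)
        ≤ ‖x‖ * ‖x‖ ^ (n+1) * (1 - ‖x‖)⁻¹ / 2 + ‖x‖ ^ (n+1) := by
          have : (‖x‖ ^ (n+1)) ^ 2 * (1 - ‖x‖ ^ (n+1))⁻¹ ≤ ‖x‖ * ‖x‖ ^ (n+1) * (1 - ‖x‖)⁻¹ := by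
            have h2 : (‖x‖ ^ (n+1)) ^ 2 ≤ ‖x‖ * ‖x‖ ^ (n+1) := by
              rw [sq]
              exact mul_le_mul_of_nonneg_right hp (pow_nonneg hx0 _)
            exact mul_le_mul h2 hinv hinv0 (by positivity)
          linarith
      _ = (‖x‖ * (1 - ‖x‖)⁻¹ / 2 + 1) * ‖x‖ ^ (n + 1) := by ring
  apply Summable.of_norm_bounded ?_ hb
  apply Summable.mul_left
  exact (summable_geometric_of_lt_one (norm_nonneg x) hx).comp_injective (add_left_injective 1)

lemma hasProd_exp {x : ℂ} (hx : ‖x‖ < 1) :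
    HasProd (fun n : ℕ => 1 - x ^ (n + 1))
      (Complex.exp (∑' n : ℕ, Complex.log (1 - x ^ (n + 1)))) := by
  have h := (summable_log hx).hasSum.cexp
  have hfe : (cexp ∘ fun n : ℕ => Complex.log (1 - x ^ (n + 1)))
      = fun n : ℕ => 1 - x ^ (n + 1) :=
    funext fun n => Complex.exp_log (factor_ne_zero hx n)
  rwa [hfe] at h

lemma Pinf_eq_exp {x : ℂ} (hx : ‖x‖ < 1) :
    Pinf x = Complex.exp (∑' n : ℕ, Complex.log (1 - x ^ (n + 1))) :=
  (hasProd_exp hx).tprod_eq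

lemma hasProd_Pinf {x : ℂ} (hx : ‖x‖ < 1) :
    HasProd (fun n : ℕ => 1 - x ^ (n + 1)) (Pinf x) := by
  rw [Pinf_eq_exp hx]; exact hasProd_exp hx

lemma Pinf_ne_zero {x : ℂ} (hx : ‖x‖ < 1) : Pinf x ≠ 0 := by
  rw [Pinf_eq_exp hx]; exact Complex.exp_ne_zero _

lemma tendsto_Fp {x : ℂ} (hx : ‖x‖ < 1) : Tendsto (Fp x) atTop (nhds (Pinf x)) :=
  (hasProd_Pinf hx).tendsto_prod_nat

lemma Fp_ne_zero {x : ℂ} (hx : ‖x‖ < 1) (m : ℕ) : Fp x m ≠ 0 :=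
  Finset.prod_ne_zero_iff.2 fun i _ => factor_ne_zero hx i

lemma Fp_succ (x : ℂ) (m : ℕ) : Fp x (m + 1) = Fp x m * (1 - x ^ (m + 1)) :=
  Finset.prod_range_succ _ m

lemma Fp_zero (x : ℂ) : Fp x 0 = 1 := rfl

/-- The Gaussian binomial `[a+b choose a]_Q`. -/
noncomputable def Gb (Q : ℂ) (a b : ℕ) : ℂ := Fp Q (a + b) / (Fp Q a * Fp Q b)

lemma Gb_zero_left {Q : ℂ} (hQ : ‖Q‖ < 1) (b : ℕ) : Gb Q 0 b = 1 := by
  rw [Gb, Fp_zero, Nat.zero_add, one_mul, div_self (Fp_ne_zero hQ b)]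

lemma Gb_zero_right {Q : ℂ} (hQ : ‖Q‖ < 1) (a : ℕ) : Gb Q a 0 = 1 := by
  rw [Gb, Fp_zero, Nat.add_zero, mul_one, div_self (Fp_ne_zero hQ a)]

lemma Gb_pascal {Q : ℂ} (hQ : ‖Q‖ < 1) (a b : ℕ) :
    Gb Q (a + 1) (b + 1) = Gb Q (a + 1) b + Q ^ (b + 1) * Gb Q a (b + 1) := by
  have h1 : a + 1 + (b + 1) = (a + (b + 1)) + 1 := by omega
  have h2 : a + 1 + b = a + (b + 1) := by omega
  rw [Gb, Gb, Gb, h1, h2, Fp_succ, Fp_succ, Fp_succ]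
  have ha := Fp_ne_zero hQ a
  have hb := Fp_ne_zero hQ b
  have hab := Fp_ne_zero hQ (a + (b + 1))
  have ha1 := factor_ne_zero hQ a
  have hb1 := factor_ne_zero hQ b
  field_simp
  ring

noncomputable def tcoef (Q x : ℂ) (p : ℕ × ℕ) : ℂ :=
  Gb Q p.1 p.2 * Q ^ Nat.choose p.1 2 * x ^ p.1

noncomputable def ucoef (Q x : ℂ) (p : ℕ × ℕ) : ℂ :=
  if p.2 = 0 then 0 else tcoef Q x (p.1 + 1, p.2 - 1)

lemma choose_succ_two (k : ℕ) : Nat.choose (k + 1) 2 = Nat.choose k 2 + k := by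
  rw [show (2:ℕ) = 1 + 1 from rfl, Nat.choose_succ_succ, Nat.choose_one_right]
  norm_num
  omega

lemma sum_ucoef {Q : ℂ} (hQ : ‖Q‖ < 1) (x : ℂ) (n : ℕ) :
    ∑ p ∈ Finset.HasAntidiagonal.antidiagonal n, ucoef Q x p + 1
      = ∑ p ∈ Finset.HasAntidiagonal.antidiagonal n, tcoef Q x p := by
  cases n with
  | zero => simp [ucoef, tcoef, Gb_zero_left hQ]
  | succ m =>
    rw [Finset.Nat.sum_antidiagonal_succ' (f := ucoef Q x),
      Finset.Nat.sum_antidiagonal_succ (f := tcoef Q x)]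
    have h1 : ucoef Q x (m + 1, 0) = 0 := by simp [ucoef]
    have h2 : tcoef Q x (0, m + 1) = 1 := by
      simp [tcoef, Gb_zero_left hQ]
    have h3 : ∀ p : ℕ × ℕ, ucoef Q x (p.1, p.2 + 1) = tcoef Q x (p.1 + 1, p.2) := by
      intro p; simp [ucoef]
    rw [h1, h2]
    simp only [h3]
    ring

lemma tcoef_step {Q : ℂ} (hQ : ‖Q‖ < 1) (x : ℂ) (n : ℕ) (p : ℕ × ℕ)
    (hp : p.1 + p.2 = n) :
    tcoef Q x (p.1 + 1, p.2) = tcoef Q x p * x * Q ^ n + ucoef Q x p := by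
  obtain ⟨a, b⟩ := p
  simp only at hp
  subst hp
  cases b with
  | zero =>
    simp [ucoef, tcoef, Gb_zero_right hQ, choose_succ_two, pow_add]
    ring
  | succ c =>
    simp only [ucoef, tcoef, if_neg (Nat.succ_ne_zero c), Nat.succ_sub_one]
    rw [Gb_pascal hQ a c, choose_succ_two]
    simp only [pow_add]
    ring

/-- Gauss's q-binomial theorem. -/
lemma gauss_binomial {Q : ℂ} (hQ : ‖Q‖ < 1) (x : ℂ) (n : ℕ) :
    ∏ i ∈ Finset.range n, (1 + x * Q ^ i)
      = ∑ p ∈ Finset.HasAntidiagonal.antidiagonal n, tcoef Q x p := by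
  induction n with
  | zero => simp [tcoef, Gb_zero_left hQ]
  | succ m ih =>
    rw [Finset.prod_range_succ, ih,
      Finset.Nat.sum_antidiagonal_succ (f := tcoef Q x)]
    have h2 : tcoef Q x (0, m + 1) = 1 := by simp [tcoef, Gb_zero_left hQ]
    have h3 : ∀ p ∈ Finset.HasAntidiagonal.antidiagonal m,
        tcoef Q x (p.1 + 1, p.2) = tcoef Q x p * x * Q ^ m + ucoef Q x p := by
      intro p hp
      exact tcoef_step hQ x m p (Finset.HasAntidiagonal.mem_antidiagonal.mp hp)
    rw [h2, Finset.sum_congr rfl h3, Finset.sum_add_distrib,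
      ← Finset.sum_mul, ← Finset.sum_mul]
    linear_combination (-1 : ℂ) * sum_ucoef hQ x m

noncomputable def Gm (q : ℂ) (m : ℕ) : ℂ := ∏ j ∈ Finset.range m, (1 + q ^ (2 * j + 1))

lemma sum_odds (m : ℕ) : ∑ j ∈ Finset.range m, (2 * j + 1) = m ^ 2 := by
  induction m with
  | zero => simp
  | succ k ih =>
    rw [Finset.sum_range_succ, ih]
    have : (k + 1) ^ 2 = k ^ 2 + 2 * k + 1 := by ring
    omega

lemma two_choose_two (k : ℕ) : 2 * Nat.choose k 2 + k = k ^ 2 := by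
  induction k with
  | zero => simp
  | succ n ih =>
    have h1 : Nat.choose (n + 1) 2 = Nat.choose n 2 + n := by
      rw [show (2:ℕ) = 1 + 1 from rfl, Nat.choose_succ_succ, Nat.choose_one_right]
      norm_num
      omega
    have h2 : (n + 1) ^ 2 = n ^ 2 + 2 * n + 1 := by ring
    omega

/-- The reindexed left-hand side of the q-binomial theorem. -/
lemma lhs_reindex {q : ℂ} (hq0 : q ≠ 0) (m : ℕ) :
    ∏ i ∈ Finset.range (m + m), (1 + (q * (q⁻¹) ^ (m + m)) * (q ^ 2) ^ i)
      = (q⁻¹) ^ (m ^ 2) * Gm q m ^ 2 := by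
  have hfac : ∀ i : ℕ, (q * (q⁻¹) ^ (m + m)) * (q ^ 2) ^ i
      = q ^ (2 * i + 1) * (q⁻¹) ^ (m + m) := by
    intro i
    rw [← pow_mul, pow_add, pow_mul]
    ring
  rw [Finset.prod_range_add]
  have hright : ∀ i : ℕ, (1 + (q * (q⁻¹) ^ (m + m)) * (q ^ 2) ^ (m + i))
      = 1 + q ^ (2 * i + 1) := by
    intro i
    rw [hfac (m + i)]
    congr 1
    have h : 2 * (m + i) + 1 = (2 * i + 1) + (m + m) := by omega
    rw [h, pow_add, mul_assoc, ← mul_pow, mul_inv_cancel₀ hq0, one_pow, mul_one]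
  have hleft : ∀ i : ℕ, i < m → (1 + (q * (q⁻¹) ^ (m + m)) * (q ^ 2) ^ (m - 1 - i))
      = (q⁻¹) ^ (2 * i + 1) * (1 + q ^ (2 * i + 1)) := by
    intro i hi
    rw [hfac (m - 1 - i)]
    have hexp : m + m = (2 * (m - 1 - i) + 1) + (2 * i + 1) := by omega
    have hA : q ^ (2 * (m - 1 - i) + 1) * (q⁻¹) ^ (m + m) = (q⁻¹) ^ (2 * i + 1) := by
      rw [hexp, pow_add q⁻¹ (2 * (m - 1 - i) + 1) (2 * i + 1), ← mul_assoc, ← mul_pow,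
        mul_inv_cancel₀ hq0, one_pow, one_mul]
    rw [hA, mul_add, mul_one, ← mul_pow, inv_mul_cancel₀ hq0, one_pow]
    ring
  have hsplit1 : ∏ i ∈ Finset.range m, (1 + (q * (q⁻¹) ^ (m + m)) * (q ^ 2) ^ i)
      = (q⁻¹) ^ (m ^ 2) * Gm q m := by
    rw [← Finset.prod_range_reflect]
    rw [Finset.prod_congr rfl (fun i hi => hleft i (Finset.mem_range.mp hi))]
    rw [Finset.prod_mul_distrib, Finset.prod_pow_eq_pow_sum, sum_odds]
    rfl
  have hsplit2 : ∏ i ∈ Finset.range m, (1 + (q * (q⁻¹) ^ (m + m)) * (q ^ 2) ^ (m + i))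
      = Gm q m := by
    rw [Finset.prod_congr rfl (fun i _ => hright i)]
    rfl
  rw [hsplit1, hsplit2]
  ring


lemma pow_cancel {q : ℂ} (hq0 : q ≠ 0) {e1 e2 e3 : ℕ} (h : e1 = e3 + e2) :
    q ^ e1 * (q⁻¹) ^ e2 = q ^ e3 := by
  subst h
  rw [pow_add, mul_assoc, ← mul_pow, mul_inv_cancel₀ hq0, one_pow, mul_one]

lemma natAbs_key (m a : ℕ) :
    ((a : ℤ) - m).natAbs ^ 2 + 2 * m * a = m ^ 2 + a ^ 2 := by
  zify
  rw [_root_.sq_abs]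
  ring

lemma finite_jtp {q : ℂ} (hq0 : q ≠ 0) (hq : ‖q‖ < 1) (m : ℕ) :
    Gm q m ^ 2 = ∑ p ∈ Finset.HasAntidiagonal.antidiagonal (m + m),
      Gb (q ^ 2) p.1 p.2 * q ^ (((p.1 : ℤ) - m).natAbs ^ 2) := by
  have hQ : ‖q ^ 2‖ < 1 := by
    rw [norm_pow]
    exact pow_lt_one₀ (norm_nonneg q) hq two_ne_zero
  have hgb := gauss_binomial hQ (q * q⁻¹ ^ (m + m)) (m + m)
  rw [lhs_reindex hq0 m] at hgb
  have h1 : Gm q m ^ 2 = q ^ (m ^ 2) * ((q⁻¹) ^ (m ^ 2) * Gm q m ^ 2) := by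
    rw [← mul_assoc, ← mul_pow, mul_inv_cancel₀ hq0, one_pow, one_mul]
  rw [h1, hgb, Finset.mul_sum]
  refine Finset.sum_congr rfl fun p hp => ?_
  simp only [tcoef]
  have expand : q ^ (m ^ 2) * (Gb (q^2) p.1 p.2 * (q^2) ^ (Nat.choose p.1 2)
        * (q * q⁻¹ ^ (m+m)) ^ p.1)
      = Gb (q^2) p.1 p.2 * (q ^ (m ^ 2 + (2 * Nat.choose p.1 2 + p.1))
        * (q⁻¹) ^ ((m+m) * p.1)) := by
    rw [mul_pow, ← pow_mul, ← pow_mul, pow_add, pow_add]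
    ring
  rw [expand, pow_cancel hq0 ?he]
  case he =>
    have h2 := two_choose_two p.1
    have h3 := natAbs_key m p.1
    have h4 : (m + m) * p.1 = 2 * m * p.1 := by ring
    rw [h4]
    omega

noncomputable def termZ (q : ℂ) (m : ℕ) (j : ℤ) : ℂ :=
  if j.natAbs ≤ m then
    Fp (q ^ 2) m * Gb (q ^ 2) ((m : ℤ) + j).toNat ((m : ℤ) - j).toNat * q ^ (j.natAbs ^ 2)
  else 0

lemma finite_jtp_Z {q : ℂ} (hq0 : q ≠ 0) (hq : ‖q‖ < 1) (m : ℕ) :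
    Fp (q ^ 2) m * Gm q m ^ 2 = ∑' j : ℤ, termZ q m j := by
  have hvan : ∀ j ∉ Finset.Icc (-(m:ℤ)) (m:ℤ), termZ q m j = 0 := by
    intro j hj
    rw [Finset.mem_Icc] at hj
    rw [termZ, if_neg (by omega)]
  rw [tsum_eq_sum hvan, finite_jtp hq0 hq m, Finset.mul_sum]
  refine Finset.sum_nbij' (i := fun p => (p.1 : ℤ) - m)
    (j := fun j => (((m : ℤ) + j).toNat, ((m : ℤ) - j).toNat)) ?_ ?_ ?_ ?_ ?_
  · intro p hp
    have := Finset.HasAntidiagonal.mem_antidiagonal.mp hp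
    rw [Finset.mem_Icc]
    omega
  · intro j hj
    rw [Finset.mem_Icc] at hj
    rw [Finset.HasAntidiagonal.mem_antidiagonal]
    omega
  · intro p hp
    have := Finset.HasAntidiagonal.mem_antidiagonal.mp hp
    ext <;> simp <;> omega
  · intro j hj
    rw [Finset.mem_Icc] at hj
    dsimp only
    omega
  · intro p hp
    have hp' := Finset.HasAntidiagonal.mem_antidiagonal.mp hp
    rw [termZ, if_pos (by omega)]
    have e1 : ((m : ℤ) + ((p.1 : ℤ) - m)).toNat = p.1 := by omega
    have e2 : ((m : ℤ) - ((p.1 : ℤ) - m)).toNat = p.2 := by omega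
    rw [e1, e2]
    ring


noncomputable def Abd (x : ℂ) : ℝ := Real.exp ((1 - ‖x‖)⁻¹)
noncomputable def Bbd (x : ℂ) : ℝ := Real.exp (-((1 - ‖x‖)⁻¹ * (1 - ‖x‖)⁻¹))

lemma sum_pow_le {s : ℝ} (hs0 : 0 ≤ s) (hs : s < 1) (n : ℕ) :
    ∑ i ∈ Finset.range n, s ^ (i + 1) ≤ (1 - s)⁻¹ := by
  have h1 : ∑ i ∈ Finset.range n, s ^ (i + 1) ≤ ∑ i ∈ Finset.range n, s ^ i := by
    apply Finset.sum_le_sum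
    intro i _
    exact pow_le_pow_of_le_one hs0 hs.le (Nat.le_succ i)
  have h2 : ∑ i ∈ Finset.range n, s ^ i ≤ ∑' i : ℕ, s ^ i :=
    Summable.sum_le_tsum _ (fun i _ => pow_nonneg hs0 i)
      (summable_geometric_of_lt_one hs0 hs)
  rw [tsum_geometric_of_lt_one hs0 hs] at h2
  linarith

lemma Fp_norm_upper {x : ℂ} (hx : ‖x‖ < 1) (n : ℕ) : ‖Fp x n‖ ≤ Abd x := by
  have hs0 : (0:ℝ) ≤ ‖x‖ := norm_nonneg x
  rw [Fp, norm_prod, Abd]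
  calc ∏ i ∈ Finset.range n, ‖1 - x ^ (i + 1)‖
      ≤ ∏ i ∈ Finset.range n, Real.exp (‖x‖ ^ (i + 1)) := by
        apply Finset.prod_le_prod (fun i _ => norm_nonneg _)
        intro i _
        calc ‖1 - x ^ (i+1)‖ ≤ ‖(1:ℂ)‖ + ‖x ^ (i+1)‖ := norm_sub_le _ _
          _ = 1 + ‖x‖ ^ (i+1) := by rw [norm_one, norm_pow]
          _ ≤ Real.exp (‖x‖ ^ (i+1)) := by
              have := Real.add_one_le_exp (‖x‖ ^ (i+1))
              linarith
    _ = Real.exp (∑ i ∈ Finset.range n, ‖x‖ ^ (i + 1)) := (Real.exp_sum _ _).symm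
    _ ≤ Real.exp ((1 - ‖x‖)⁻¹) := Real.exp_le_exp.2 (sum_pow_le hs0 hx n)

lemma Fp_norm_lower {x : ℂ} (hx : ‖x‖ < 1) (n : ℕ) : Bbd x ≤ ‖Fp x n‖ := by
  have hs0 : (0:ℝ) ≤ ‖x‖ := norm_nonneg x
  have hfac : ∀ i : ℕ, Real.exp (-(‖x‖ ^ (i + 1) * (1 - ‖x‖)⁻¹)) ≤ ‖1 - x ^ (i + 1)‖ := by
    intro i
    have ht0 : (0:ℝ) ≤ ‖x‖ ^ (i+1) := pow_nonneg hs0 _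
    have hts : ‖x‖ ^ (i+1) ≤ ‖x‖ :=
      pow_le_of_le_one hs0 hx.le (Nat.succ_ne_zero i)
    have hlt : ‖x‖ ^ (i+1) < 1 := lt_of_le_of_lt hts hx
    set t := ‖x‖ ^ (i+1)
    have h1 : ‖1 - x ^ (i+1)‖ ≥ 1 - t := by
      have := norm_sub_norm_le (1:ℂ) (x ^ (i+1))
      rw [norm_one, norm_pow] at this
      linarith [this]
    have h2 : (1:ℝ) - t ≥ Real.exp (-(t * (1 - t)⁻¹)) := by
      have hpos : (0:ℝ) < 1 - t := by linarith
      have h3 : 1 + t * (1 - t)⁻¹ ≤ Real.exp (t * (1 - t)⁻¹) := by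
        have := Real.add_one_le_exp (t * (1 - t)⁻¹)
        linarith
      have h4 : (1 - t)⁻¹ ≤ Real.exp (t * (1 - t)⁻¹) := by
        have : (1 - t)⁻¹ = 1 + t * (1 - t)⁻¹ := by field_simp; ring
        linarith [this ▸ h3]
      have h5 : Real.exp (-(t * (1 - t)⁻¹)) = (Real.exp (t * (1 - t)⁻¹))⁻¹ :=
        Real.exp_neg _
      rw [ge_iff_le, h5]
      rw [inv_le_iff_one_le_mul₀ (Real.exp_pos _)]
      calc (1:ℝ) = (1 - t)⁻¹ * (1 - t) := by field_simp
        _ ≤ Real.exp (t * (1 - t)⁻¹) * (1 - t) :=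
            mul_le_mul_of_nonneg_right h4 hpos.le
        _ = (1 - t) * Real.exp (t * (1 - t)⁻¹) := by ring
    have h6 : Real.exp (-(t * (1 - ‖x‖)⁻¹)) ≤ Real.exp (-(t * (1 - t)⁻¹)) := by
      apply Real.exp_le_exp.2
      have hxx : (0:ℝ) < 1 - ‖x‖ := by linarith
      have hinvle : (1 - t)⁻¹ ≤ (1 - ‖x‖)⁻¹ := by
        apply inv_anti₀ hxx
        linarith
      nlinarith [ht0]
    linarith
  rw [Fp, norm_prod, Bbd]
  calc Real.exp (-((1 - ‖x‖)⁻¹ * (1 - ‖x‖)⁻¹))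
      ≤ Real.exp (-((∑ i ∈ Finset.range n, ‖x‖ ^ (i + 1)) * (1 - ‖x‖)⁻¹)) := by
        apply Real.exp_le_exp.2
        have h := sum_pow_le hs0 hx n
        have hinv0 : (0:ℝ) ≤ (1 - ‖x‖)⁻¹ := by
          apply inv_nonneg.2; linarith
        nlinarith
    _ = ∏ i ∈ Finset.range n, Real.exp (-(‖x‖ ^ (i + 1) * (1 - ‖x‖)⁻¹)) := by
        rw [← Real.exp_sum]
        congr 1
        rw [Finset.sum_neg_distrib, Finset.sum_mul]
    _ ≤ ∏ i ∈ Finset.range n, ‖1 - x ^ (i + 1)‖ := by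
        apply Finset.prod_le_prod (fun i _ => (Real.exp_pos _).le)
        intro i _
        exact hfac i

lemma Bbd_pos (x : ℂ) : 0 < Bbd x := Real.exp_pos _

lemma Gb_norm_le {x : ℂ} (hx : ‖x‖ < 1) (a b : ℕ) :
    ‖Gb x a b‖ ≤ Abd x / (Bbd x * Bbd x) := by
  rw [Gb, norm_div, norm_mul]
  have hA0 : 0 ≤ Abd x := (Real.exp_pos _).le
  have hB := Bbd_pos x
  apply div_le_div₀ hA0 (Fp_norm_upper hx _) (by positivity)
  exact mul_le_mul (Fp_norm_lower hx a) (Fp_norm_lower hx b) hB.le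
    ((hB.trans_le (Fp_norm_lower hx a)).le)


lemma summable_geom_natAbs {r : ℝ} (hr0 : 0 ≤ r) (hr : r < 1) :
    Summable (fun j : ℤ => r ^ j.natAbs) := by
  apply Summable.of_nat_of_neg
  · simpa using summable_geometric_of_lt_one hr0 hr
  · simpa using summable_geometric_of_lt_one hr0 hr

lemma norm_sq_lt_one {q : ℂ} (hq : ‖q‖ < 1) : ‖q ^ 2‖ < 1 := by
  rw [norm_pow]
  exact pow_lt_one₀ (norm_nonneg q) hq two_ne_zero

lemma termZ_norm_le {q : ℂ} (hq : ‖q‖ < 1) (m : ℕ) (j : ℤ) :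
    ‖termZ q m j‖ ≤
      Abd (q ^ 2) * (Abd (q ^ 2) / (Bbd (q ^ 2) * Bbd (q ^ 2))) * ‖q‖ ^ j.natAbs := by
  have hx := norm_sq_lt_one hq
  have hA0 : 0 ≤ Abd (q ^ 2) := (Real.exp_pos _).le
  have hB := Bbd_pos (q ^ 2)
  rw [termZ]
  split
  · rw [norm_mul, norm_mul, norm_pow]
    have h1 : ‖q‖ ^ (j.natAbs ^ 2) ≤ ‖q‖ ^ j.natAbs :=
      pow_le_pow_of_le_one (norm_nonneg q) hq.le (Nat.le_self_pow two_ne_zero _)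
    have h2 := Fp_norm_upper hx m
    have h3 := Gb_norm_le hx (((m:ℤ) + j).toNat) (((m:ℤ) - j).toNat)
    have h4 : (0:ℝ) ≤ ‖q‖ ^ (j.natAbs ^ 2) := by positivity
    have h5 : (0:ℝ) ≤ ‖Gb (q ^ 2) ((m:ℤ) + j).toNat ((m:ℤ) - j).toNat‖ := norm_nonneg _
    have h6 : (0:ℝ) ≤ Abd (q ^ 2) / (Bbd (q ^ 2) * Bbd (q ^ 2)) := by positivity
    calc ‖Fp (q ^ 2) m‖ * ‖Gb (q ^ 2) ((m:ℤ) + j).toNat ((m:ℤ) - j).toNat‖ * ‖q‖ ^ (j.natAbs ^ 2)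
        ≤ Abd (q ^ 2) * (Abd (q ^ 2) / (Bbd (q ^ 2) * Bbd (q ^ 2))) * ‖q‖ ^ (j.natAbs ^ 2) := by
          apply mul_le_mul_of_nonneg_right _ h4
          exact mul_le_mul h2 h3 h5 hA0
      _ ≤ Abd (q ^ 2) * (Abd (q ^ 2) / (Bbd (q ^ 2) * Bbd (q ^ 2))) * ‖q‖ ^ j.natAbs := by
          apply mul_le_mul_of_nonneg_left h1 (by positivity)
  · rw [norm_zero]
    positivity

lemma tendsto_double : Tendsto (fun m : ℕ => m + m) atTop atTop :=
  tendsto_atTop_atTop.2 fun b => ⟨b, fun a ha => by omega⟩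

lemma termZ_tendsto {q : ℂ} (hq0 : q ≠ 0) (hq : ‖q‖ < 1) (j : ℤ) :
    Tendsto (fun m => termZ q m j) atTop (𝓝 (q ^ (j.natAbs ^ 2))) := by
  have hx := norm_sq_lt_one hq
  have hP : Pinf (q ^ 2) ≠ 0 := Pinf_ne_zero hx
  have t1 : Tendsto (fun m : ℕ => Fp (q ^ 2) m) atTop (𝓝 (Pinf (q ^ 2))) := tendsto_Fp hx
  have t2 : Tendsto (fun m : ℕ => Fp (q ^ 2) (m + m)) atTop (𝓝 (Pinf (q ^ 2))) :=
    t1.comp tendsto_double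
  have t3 : Tendsto (fun m : ℕ => Fp (q ^ 2) (((m:ℤ) + j).toNat)) atTop (𝓝 (Pinf (q ^ 2))) :=
    t1.comp (tendsto_atTop_atTop.2 fun b => ⟨b + j.natAbs, fun a ha => by omega⟩)
  have t4 : Tendsto (fun m : ℕ => Fp (q ^ 2) (((m:ℤ) - j).toNat)) atTop (𝓝 (Pinf (q ^ 2))) :=
    t1.comp (tendsto_atTop_atTop.2 fun b => ⟨b + j.natAbs, fun a ha => by omega⟩)
  have tall : Tendsto (fun m : ℕ => Fp (q ^ 2) m *
      (Fp (q ^ 2) (m + m) / (Fp (q ^ 2) (((m:ℤ) + j).toNat) * Fp (q ^ 2) (((m:ℤ) - j).toNat)))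
      * q ^ (j.natAbs ^ 2)) atTop
      (𝓝 (Pinf (q ^ 2) * (Pinf (q ^ 2) / (Pinf (q ^ 2) * Pinf (q ^ 2))) * q ^ (j.natAbs ^ 2))) :=
    ((t1.mul (t2.div (t3.mul t4) (mul_ne_zero hP hP))).mul_const _)
  have hval : Pinf (q ^ 2) * (Pinf (q ^ 2) / (Pinf (q ^ 2) * Pinf (q ^ 2))) * q ^ (j.natAbs ^ 2)
      = q ^ (j.natAbs ^ 2) := by
    field_simp
  rw [hval] at tall
  apply Tendsto.congr' _ tall
  filter_upwards [eventually_ge_atTop j.natAbs] with m hm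
  rw [termZ, if_pos hm, Gb]
  have hsum : (((m:ℤ) + j).toNat) + (((m:ℤ) - j).toNat) = m + m := by omega
  rw [hsum]

lemma Gm_succ (q : ℂ) (k : ℕ) : Gm q (k + 1) = Gm q k * (1 + q ^ (2 * k + 1)) :=
  Finset.prod_range_succ _ k

lemma euler_fin (q : ℂ) (m : ℕ) : Fp (-q) (m + m) = Fp (q ^ 2) m * Gm q m := by
  induction m with
  | zero => simp [Fp, Gm]
  | succ k ih =>
    have hidx : (k + 1) + (k + 1) = ((k + k) + 1) + 1 := by omega
    rw [hidx, Fp_succ, Fp_succ, ih, Fp_succ, Gm_succ]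
    have hodd : (-q) ^ ((k + k) + 1) = -(q ^ ((k + k) + 1)) :=
      Odd.neg_pow ⟨k, by omega⟩ q
    have heven : (-q) ^ (((k + k) + 1) + 1) = q ^ (((k + k) + 1) + 1) :=
      Even.neg_pow ⟨k + 1, by omega⟩ q
    have hsq : (q ^ 2) ^ (k + 1) = q ^ (((k + k) + 1) + 1) := by
      rw [← pow_mul]
      congr 1
      omega
    rw [hodd, heven, hsq]
    ring

lemma lhs_tendsto {q : ℂ} (hq0 : q ≠ 0) (hq : ‖q‖ < 1) :
    Tendsto (fun m => Fp (q ^ 2) m * Gm q m ^ 2) atTop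
      (𝓝 (Pinf (-q) ^ 2 / Pinf (q ^ 2))) := by
  have hx := norm_sq_lt_one hq
  have hnq : ‖-q‖ < 1 := by rwa [norm_neg]
  have h : ∀ m : ℕ, Fp (q ^ 2) m * Gm q m ^ 2 = Fp (-q) (m + m) ^ 2 / Fp (q ^ 2) m := by
    intro m
    rw [euler_fin]
    field_simp [Fp_ne_zero hx m]
  have t5 : Tendsto (fun m : ℕ => Fp (-q) (m + m) ^ 2 / Fp (q ^ 2) m) atTop
      (𝓝 (Pinf (-q) ^ 2 / Pinf (q ^ 2))) :=
    (((tendsto_Fp hnq).comp tendsto_double).pow 2).div (tendsto_Fp hx) (Pinf_ne_zero hx)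
  exact (funext h : _) ▸ t5

/-- The Jacobi triple product identity, specialized at `z = 1`. -/
theorem jtp_main {q : ℂ} (hq0 : q ≠ 0) (hq : ‖q‖ < 1) :
    ∑' j : ℤ, q ^ (j.natAbs ^ 2) = Pinf (-q) ^ 2 / Pinf (q ^ 2) := by
  have hbd : Summable (fun j : ℤ =>
      Abd (q ^ 2) * (Abd (q ^ 2) / (Bbd (q ^ 2) * Bbd (q ^ 2))) * ‖q‖ ^ j.natAbs) :=
    (summable_geom_natAbs (norm_nonneg q) hq).mul_left _
  have hsum : Tendsto (fun m => ∑' j : ℤ, termZ q m j) atTop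
      (𝓝 (∑' j : ℤ, q ^ (j.natAbs ^ 2))) :=
    tendsto_tsum_of_dominated_convergence hbd (termZ_tendsto hq0 hq)
      (Filter.Eventually.of_forall fun m => fun j => termZ_norm_le hq m j)
  have hsum' : Tendsto (fun m => Fp (q ^ 2) m * Gm q m ^ 2) atTop
      (𝓝 (∑' j : ℤ, q ^ (j.natAbs ^ 2))) := by
    apply hsum.congr
    intro m
    exact (finite_jtp_Z hq0 hq m).symm
  exact tendsto_nhds_unique hsum' (lhs_tendsto hq0 hq)


lemma q_norm_lt_one {τ : ℂ} (hτ : 0 < τ.im) : ‖Complex.exp (π * I * τ)‖ < 1 := by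
  rw [Complex.norm_exp]
  rw [Real.exp_lt_one_iff]
  have : (↑π * I * τ).re = -(π * τ.im) := by
    simp [Complex.mul_re, Complex.mul_im]
  rw [this]
  have := Real.pi_pos
  nlinarith

lemma eta_half {τ : ℂ} (hτ : 0 < τ.im) :
    dedekindEta ((τ + 1) / 2)
      = Complex.exp (π * I * ((τ + 1) / 2) / 12) * Pinf (-(Complex.exp (π * I * τ))) := by
  rw [dedekindEta, Pinf]
  congr 1
  apply tprod_congr
  intro n
  congr 1
  have h1 : -(Complex.exp (π * I * τ)) = Complex.exp (π * I + π * I * τ) := by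
    rw [Complex.exp_add, Complex.exp_pi_mul_I]
    ring
  rw [h1, ← Complex.exp_nat_mul]
  congr 1
  push_cast
  ring

lemma eta_shift {τ : ℂ} (hτ : 0 < τ.im) :
    dedekindEta (τ + 1)
      = Complex.exp (π * I * (τ + 1) / 12) * Pinf ((Complex.exp (π * I * τ)) ^ 2) := by
  rw [dedekindEta, Pinf]
  congr 1
  apply tprod_congr
  intro n
  congr 1
  have h1 : ((Complex.exp (π * I * τ)) ^ 2) ^ (n + 1)
      = Complex.exp ((2 : ℂ) * π * I * ((n : ℂ) + 1) * τ) := by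
    rw [← Complex.exp_nat_mul (π * I * τ) 2, ← Complex.exp_nat_mul]
    congr 1
    push_cast
    ring
  rw [h1]
  have h2 : Complex.exp (2 * π * I * ((n : ℂ) + 1) * (τ + 1))
      = Complex.exp (2 * π * I * ((n : ℂ) + 1) * τ) * Complex.exp ((((n : ℤ) + 1 : ℤ) : ℂ) * (2 * π * I)) := by
    rw [← Complex.exp_add]
    congr 1
    push_cast
    ring
  rw [h2, Complex.exp_int_mul_two_pi_mul_I ((n : ℤ) + 1), mul_one]

lemma theta_eq {τ : ℂ} (hτ : 0 < τ.im) :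
    jacobiTheta τ = ∑' j : ℤ, (Complex.exp (π * I * τ)) ^ (j.natAbs ^ 2) := by
  rw [jacobiTheta]
  apply tsum_congr
  intro n
  rw [← Complex.exp_nat_mul]
  congr 1
  have h3 : ((n.natAbs ^ 2 : ℕ) : ℤ) = n ^ 2 := by
    rw [Nat.cast_pow, Int.natAbs_sq]
  have h : ((n.natAbs ^ 2 : ℕ) : ℂ) = ((n : ℂ)) ^ 2 := by
    have h4 := congrArg (fun z : ℤ => (z : ℂ)) h3
    rw [← Int.cast_natCast, h3, Int.cast_pow]
  rw [h]
  ring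

end JTP


open JTP in
/-- For `τ` in the upper half-plane, the Dedekind eta function satisfies `η(τ+1) ≠ 0` and the
Jacobi theta function satisfies `θ(τ) = η((τ+1)/2)² / η(τ+1)`. -/
theorem jacobiTheta_eq_dedekindEta_sq_div (τ : ℂ) (hτ : 0 < τ.im) :
    dedekindEta (τ + 1) ≠ 0 ∧
    jacobiTheta τ = dedekindEta ((τ + 1) / 2) ^ 2 / dedekindEta (τ + 1) := by
  set q := Complex.exp (π * Complex.I * τ) with hqdef
  have hq0 : q ≠ 0 := Complex.exp_ne_zero _
  have hq : ‖q‖ < 1 := q_norm_lt_one hτ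
  have hx : ‖q ^ 2‖ < 1 := norm_sq_lt_one hq
  have hη : dedekindEta (τ + 1) = Complex.exp (π * Complex.I * (τ + 1) / 12) * Pinf (q ^ 2) :=
    eta_shift hτ
  constructor
  · rw [hη]
    exact mul_ne_zero (Complex.exp_ne_zero _) (Pinf_ne_zero hx)
  · have hpref : Complex.exp (π * Complex.I * ((τ + 1) / 2) / 12) ^ 2
        = Complex.exp (π * Complex.I * (τ + 1) / 12) := by
      rw [sq, ← Complex.exp_add]
      congr 1
      ring
    rw [theta_eq hτ, jtp_main hq0 hq, eta_half hτ, hη, mul_pow, hpref, ← hqdef,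
      mul_div_mul_left _ _ (Complex.exp_ne_zero _)]
end
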